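/- For all natural numbers m and n, the Haar integral ∫_{SU(2)} U_m(Re(trace g)/2) · U_n(Re(trace g)/2) dμ(g) equals 1 if m = n and 0 otherwise. (This is the orthonormality of the SU(2) characters χ_j, j = m/2, equivalently the statement that each Wilson loop state W_j(g) = χ_j(g) is normalized, ∫ dg |χ_j(g)|² = 1, and that distinct Wilson loop states are orthogonal.) -/

import Mathlib

/-!
Write `g ∈ SU(2)` as `[[a, -c̄], [c, ā]]`, so that `Re (tr g) / 2 = Re a`. Left translation by
`diag(ζ, ζ̄)` multiplies `a^p c^q ā^r c̄^s` by `ζ^(p+s-q-r)`, so the Haar integral of such a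
monomial vanishes unless `p + s = q + r`. Left translation by the real rotation with rows
`(α, β), (-β, α)` then shows that `∑ᵢ C(n,i)² α^(2i) β^(2(n-i)) ∫|a|^(2i) |c|^(2(n-i))` equals
`∫|a|^(2n)` for all `α² + β² = 1`. At `α = 0` this gives `∫|c|^(2n) = ∫|a|^(2n)`; comparing the
coefficients of `α²` and using `|a|² = 1 - |c|²` gives `(n+1) ∫|c|^(2n) = n ∫|c|^(2n-2)`, so
`∫|a|^(2n) = 1/(n+1)`. Hence `∫ (Re a)^(2j) = C(2j,j) / (4^j (j+1))` and the odd moments vanish: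
these are the moments of `cos θ` for the density `(2/π) sin² θ` on `[0, π]`. Since
`U_n(cos θ) sin θ = sin((n+1)θ)`, the claim becomes the orthogonality of the `sin((n+1)θ)` on
`[0, π]`.
-/

open MeasureTheory Matrix

noncomputable section

/-- `SU(2)`: the special unitary group of `2 × 2` complex matrices. -/
abbrev SU2 := Matrix.specialUnitaryGroup (Fin 2) ℂ

/-- The group structure on `SU(2)` (inverse given by the conjugate transpose). -/
instance : Group SU2 :=
  { (inferInstance : Monoid SU2) with
    inv := fun g =>
      ⟨star g.1, Submonoid.mem_inf.2
        ⟨Unitary.star_mem (Submonoid.mem_inf.1 g.2).1, by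
          have h : (g.1).det = 1 := (Submonoid.mem_inf.1 g.2).2
          simp [MonoidHom.mem_mker, Matrix.star_eq_conjTranspose, Matrix.det_conjTranspose, h]⟩⟩
    inv_mul_cancel := fun g => Subtype.ext (Submonoid.mem_inf.1 g.2).1.1 }

/-- The Borel σ-algebra on `SU(2)` (with its subspace topology). -/
instance : MeasurableSpace SU2 := borel _

theorem isCompact_specialUnitaryGroup {n 𝕜 : Type*} [Fintype n] [DecidableEq n] [RCLike 𝕜] :
    IsCompact (specialUnitaryGroup n 𝕜 : Set (Matrix n n 𝕜)) := by
  refine (isCompact_univ_pi fun _ => isCompact_univ_pi fun _ =>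
    isCompact_closedBall (0 : 𝕜) 1).of_isClosed_subset ?_ fun A hA => ?_
  · exact (isClosed_unitary (R := Matrix n n 𝕜)).inter
      (isClosed_singleton.preimage continuous_id.matrix_det)
  · exact Set.mem_univ_pi.2 fun i => Set.mem_univ_pi.2 fun j =>
      mem_closedBall_zero_iff.2 (entry_norm_bound_of_unitary hA.1 i j)

theorem Matrix.star_eq_adjugate_of_mem_specialUnitaryGroup {n α : Type*} [Fintype n]
    [DecidableEq n] [CommRing α] [StarRing α] {A : Matrix n n α}
    (hA : A ∈ specialUnitaryGroup n α) : star A = adjugate A := by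
  obtain ⟨hunit, hdet⟩ := mem_specialUnitaryGroup_iff.1 hA
  calc star A = star A * (A * adjugate A) := by
        rw [mul_adjugate, show A.det = 1 from hdet, one_smul, mul_one]
    _ = adjugate A := by rw [← mul_assoc, mem_unitaryGroup_iff'.1 hunit, one_mul]

theorem integral_eq_zero_of_comp_mul_left_eq_smul {G E : Type*} [Group G] [MeasurableSpace G]
    [MeasurableMul G] [NormedAddCommGroup E] [NormedSpace ℂ E] {μ : Measure G}
    [μ.IsMulLeftInvariant] {f : G → E} {h : G} {c : ℂ} (hc : c ≠ 1)
    (hf : ∀ g, f (h * g) = c • f g) : ∫ g, f g ∂μ = 0 := by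
  have hinv := integral_mul_left_eq_self (μ := μ) f h
  simp only [hf, integral_smul] at hinv
  have hzero : (c - 1) • ∫ g, f g ∂μ = 0 := by rw [sub_smul, one_smul, hinv, sub_self]
  exact (smul_eq_zero.1 hzero).resolve_left (sub_ne_zero.2 hc)

open Polynomial in
theorem Polynomial.coeff_one_one_sub_X_pow {R : Type*} [CommRing R] (n : ℕ) :
    ((1 - X : R[X]) ^ n).coeff 1 = -n := by
  induction n with
  | zero => simp [coeff_one]
  | succ n ih =>
    rw [pow_succ, mul_sub, mul_one, coeff_sub, coeff_mul_X, ih, coeff_zero_eq_eval_zero]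
    simp only [eval_pow, eval_sub, eval_one, eval_X, sub_zero, one_pow]
    push_cast
    ring

open Polynomial in
theorem eq_nat_mul_of_forall_sum_pow_mul_one_sub_pow_eq {c : ℕ → ℝ} {d : ℝ} {n : ℕ}
    (hn : 1 ≤ n)
    (h : ∀ s ∈ Set.Icc (0 : ℝ) 1,
      ∑ i ∈ Finset.range (n + 1), c i * s ^ i * (1 - s) ^ (n - i) = d) :
    c 1 = n * c 0 := by
  set P : ℝ[X] := ∑ i ∈ Finset.range (n + 1), C (c i) * X ^ i * (1 - X) ^ (n - i)
  have hP : P = C d := eq_of_infinite_eval_eq P (C d) <|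
    (Set.Icc_infinite zero_lt_one).mono fun s hs => by simp [P, eval_finsetSum, h s hs]
  have hcoeff (i : ℕ) : (C (c i) * X ^ i * (1 - X) ^ (n - i)).coeff 1 =
      if i = 0 then -n * c 0 else if i = 1 then c 1 else 0 := by
    match i with
    | 0 =>
      rw [pow_zero, mul_one, Nat.sub_zero, coeff_C_mul, coeff_one_one_sub_X_pow, if_pos rfl]
      ring
    | 1 =>
      rw [pow_one, mul_assoc, coeff_C_mul, coeff_X_mul, coeff_zero_eq_eval_zero,
        if_neg one_ne_zero, if_pos rfl]
      simp
    | i + 2 =>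
      rw [mul_assoc, coeff_C_mul, coeff_X_pow_mul', if_neg (by omega), if_neg (by omega),
        if_neg (by omega), mul_zero]
  have hP1 : P.coeff 1 = c 1 - n * c 0 := by
    obtain ⟨m, rfl⟩ : ∃ m, n = m + 1 := ⟨n - 1, by omega⟩
    rw [finsetSum_coeff, Finset.sum_congr rfl fun i _ => hcoeff i, Finset.sum_range_succ',
      Finset.sum_range_succ',
      Finset.sum_eq_zero fun i _ => by rw [if_neg (by omega), if_neg (by omega)]]
    simp only [zero_add, one_ne_zero, if_false, if_true]
    push_cast
    ring
  rw [hP, coeff_C_of_ne_zero one_ne_zero] at hP1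
  linear_combination -hP1

section Trigonometric

open Real

theorem integral_cos_pow_mul_sin_sq (k : ℕ) :
    ∫ x in 0..π, cos x ^ k * sin x ^ 2 = (∫ x in 0..π, cos x ^ k) / (k + 2) := by
  have hsplit : ∫ x in 0..π, cos x ^ k * sin x ^ 2 =
      (∫ x in 0..π, cos x ^ k) - ∫ x in 0..π, cos x ^ (k + 2) := by
    rw [← intervalIntegral.integral_sub ((by fun_prop : Continuous _).intervalIntegrable _ _)
      ((by fun_prop : Continuous _).intervalIntegrable _ _)]
    congr 1 with x
    rw [sin_sq]
    ring
  rw [hsplit, integral_cos_pow]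
  simp only [cos_pi, sin_pi, mul_zero, sin_zero, sub_self, zero_div, zero_add]
  field_simp
  ring

theorem integral_cos_pow_odd (j : ℕ) : ∫ x in 0..π, cos x ^ (2 * j + 1) = 0 := by
  induction j with
  | zero => simp
  | succ j ih =>
    rw [show 2 * (j + 1) + 1 = 2 * j + 1 + 2 by ring, integral_cos_pow, ih]
    simp

theorem integral_cos_pow_even (j : ℕ) :
    ∫ x in 0..π, cos x ^ (2 * j) = π * j.centralBinom / 4 ^ j := by
  induction j with
  | zero => simp
  | succ j ih =>
    have hc : ((j : ℝ) + 1) * (j + 1).centralBinom = 2 * (2 * j + 1) * j.centralBinom := by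
      exact_mod_cast Nat.succ_mul_centralBinom_succ j
    rw [show 2 * (j + 1) = 2 * j + 2 by ring, integral_cos_pow, ih]
    simp only [cos_pi, sin_pi, mul_zero, sin_zero, sub_self, zero_div, zero_add]
    field_simp
    rw [pow_succ]
    push_cast
    linear_combination (-2 * 4 ^ j : ℝ) * hc

theorem integral_cos_int_mul (k : ℤ) :
    ∫ x in 0..π, cos (k * x) = if k = 0 then π else 0 := by
  split_ifs with hk
  · simp [hk]
  · rw [intervalIntegral.integral_comp_mul_left cos (Int.cast_ne_zero.2 hk)]
    simp [sin_int_mul_pi]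

theorem integral_sin_mul_sin (m n : ℕ) :
    ∫ x in 0..π, sin ((m + 1) * x) * sin ((n + 1) * x) = if m = n then π / 2 else 0 := by
  have hprod : ∀ x : ℝ, sin ((m + 1) * x) * sin ((n + 1) * x) =
      (cos (((m - n : ℤ) : ℝ) * x) - cos (((m + n + 2 : ℤ) : ℝ) * x)) / 2 := by
    intro x
    rw [eq_div_iff two_ne_zero, mul_comm, ← mul_assoc, two_mul_sin_mul_sin]
    push_cast
    ring_nf
  simp_rw [hprod]
  rw [intervalIntegral.integral_div, intervalIntegral.integral_sub
    ((by fun_prop : Continuous _).intervalIntegrable _ _)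
    ((by fun_prop : Continuous _).intervalIntegrable _ _), integral_cos_int_mul,
    integral_cos_int_mul, if_neg (by omega : (m + n + 2 : ℤ) ≠ 0)]
  by_cases h : m = n
  · simp [h]
  · simp [h, sub_eq_zero]

theorem Polynomial.Chebyshev.eval_U_mul_U_cos_mul_sin_sq (m n : ℕ) (x : ℝ) :
    (U ℝ m * U ℝ n).eval (cos x) * sin x ^ 2 = sin ((m + 1) * x) * sin ((n + 1) * x) := by
  have hm := U_real_cos x m
  have hn := U_real_cos x n
  push_cast at hm hn
  rw [← hm, ← hn, eval_mul]
  ring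

end Trigonometric

instance : BorelSpace SU2 := ⟨rfl⟩

instance : CompactSpace SU2 := isCompact_iff_compactSpace.mp isCompact_specialUnitaryGroup

namespace SU2

open Complex ComplexConjugate

theorem apply_one_one (g : SU2) : g.1 1 1 = conj (g.1 0 0) := by
  have h := congrFun₂ (star_eq_adjugate_of_mem_specialUnitaryGroup g.2) 0 0
  rw [adjugate_fin_two, star_apply] at h
  simp only [of_apply, cons_val', cons_val_zero, empty_val', cons_val_fin_one] at h
  rw [← h]
  rfl

theorem re_trace_div_two (g : SU2) : g.1.trace.re / 2 = (g.1 0 0).re := by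
  rw [trace_fin_two, apply_one_one, add_re, conj_re]
  ring

theorem normSq_add_normSq (g : SU2) : normSq (g.1 0 0) + normSq (g.1 1 0) = 1 := by
  have h := congrFun₂ (mem_unitaryGroup_iff'.1 (mem_specialUnitaryGroup_iff.1 g.2).1) 0 0
  simp only [mul_apply, Fin.sum_univ_two, star_apply, one_apply_eq] at h
  rw [← ofReal_inj]
  push_cast
  simpa [mul_comm, ← mul_conj] using h

@[fun_prop]
theorem continuous_entry (i j : Fin 2) : Continuous fun g : SU2 => g.1 i j :=
  (continuous_apply_apply i j).comp continuous_subtype_val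

def ofColumn (a c : ℂ) (h : normSq a + normSq c = 1) : SU2 :=
  ⟨!![a, -conj c; c, conj a], by
    have h' : a * conj a + c * conj c = 1 := by
      rw [mul_conj, mul_conj]; exact_mod_cast h
    refine mem_specialUnitaryGroup_iff.2 ⟨mem_unitaryGroup_iff'.2 ?_, ?_⟩
    · ext i j
      fin_cases i <;> fin_cases j <;> simp [mul_apply, Fin.sum_univ_two] <;>
        first | linear_combination h' | ring
    · rw [det_fin_two_of]
      linear_combination h'⟩

theorem ofColumn_mul_apply_zero_zero (a c : ℂ) (h : normSq a + normSq c = 1) (g : SU2) :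
    (ofColumn a c h * g).1 0 0 = a * g.1 0 0 - conj c * g.1 1 0 := by
  simp [ofColumn, mul_apply, Fin.sum_univ_two, sub_eq_add_neg]

theorem ofColumn_mul_apply_one_zero (a c : ℂ) (h : normSq a + normSq c = 1) (g : SU2) :
    (ofColumn a c h * g).1 1 0 = c * g.1 0 0 + conj a * g.1 1 0 := by
  simp [ofColumn, mul_apply, Fin.sum_univ_two]

def colMonomial (p q r s : ℕ) (g : SU2) : ℂ :=
  g.1 0 0 ^ p * g.1 1 0 ^ q * conj (g.1 0 0) ^ r * conj (g.1 1 0) ^ s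

@[fun_prop]
theorem continuous_colMonomial (p q r s : ℕ) : Continuous (colMonomial p q r s) := by
  unfold colMonomial
  fun_prop

theorem colMonomial_ofColumn_mul (ζ : ℂ) (hζ : normSq ζ + normSq 0 = 1) (p q r s : ℕ) (g : SU2) :
    colMonomial p q r s (ofColumn ζ 0 hζ * g) =
      ζ ^ (p + s) * conj ζ ^ (q + r) * colMonomial p q r s g := by
  simp only [colMonomial, ofColumn_mul_apply_zero_zero, ofColumn_mul_apply_one_zero, map_zero,
    zero_mul, sub_zero, zero_add, map_mul, conj_conj]
  ring

theorem colMonomial_self (p q : ℕ) (g : SU2) :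
    colMonomial p q p q g = ((normSq (g.1 0 0) ^ p * normSq (g.1 1 0) ^ q : ℝ) : ℂ) := by
  simp only [colMonomial, ofReal_mul, ofReal_pow, ← mul_conj]
  ring

theorem ofReal_normSq_ofColumn_mul_pow (α β : ℝ) (h : normSq (α : ℂ) + normSq (-β : ℂ) = 1)
    (n : ℕ) (g : SU2) :
    ((normSq ((ofColumn α (-β) h * g).1 0 0) ^ n : ℝ) : ℂ) =
      ∑ i ∈ Finset.range (n + 1), ∑ l ∈ Finset.range (n + 1),
        ((n.choose i * n.choose l * α ^ (i + l) * β ^ (n - i + (n - l)) : ℝ) : ℂ) *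
          colMonomial i (n - i) l (n - l) g := by
  rw [ofColumn_mul_apply_zero_zero, ofReal_pow, ← mul_conj, mul_pow]
  simp only [map_add, map_mul, map_neg, conj_ofReal, neg_mul, sub_neg_eq_add]
  rw [add_pow, add_pow, Finset.sum_mul_sum]
  refine Finset.sum_congr rfl fun i _ => Finset.sum_congr rfl fun l _ => ?_
  simp only [colMonomial]
  push_cast
  ring

theorem ofReal_re_pow (k : ℕ) (g : SU2) :
    (((g.1 0 0).re ^ k : ℝ) : ℂ) =
      (2 ^ k)⁻¹ * ∑ i ∈ Finset.range (k + 1), k.choose i * colMonomial i 0 (k - i) 0 g := by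
  rw [ofReal_pow, re_eq_add_conj, div_pow, div_eq_inv_mul, add_pow]
  congr 1
  refine Finset.sum_congr rfl fun i _ => ?_
  rw [colMonomial, pow_zero, pow_zero, mul_one, mul_one, mul_comm]

variable (μ : Measure SU2)

def normSqMoment (p q : ℕ) : ℝ :=
  ∫ g, normSq (g.1 0 0) ^ p * normSq (g.1 1 0) ^ q ∂μ

theorem integral_colMonomial_self (p q : ℕ) :
    ∫ g, colMonomial p q p q g ∂μ = normSqMoment μ p q := by
  simp only [colMonomial_self, normSqMoment]
  exact integral_complex_ofReal

variable [μ.IsHaarMeasure]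

theorem integral_colMonomial_eq_zero {p q r s : ℕ} (h : (p + s : ℤ) ≠ q + r) :
    ∫ g, colMonomial p q r s g ∂μ = 0 := by
  set d : ℤ := p + s - (q + r)
  set θ : ℝ := Real.pi / d
  have hθ : (d : ℝ) * θ = Real.pi := mul_div_cancel₀ _ (Int.cast_ne_zero.2 (sub_ne_zero.2 h))
  -- left translation by `diag(ζ, ζ̄)` multiplies the monomial by `ζ ^ d = -1`
  set ζ := exp (θ * I)
  have hζ : normSq ζ + normSq 0 = 1 := by simp [ζ, normSq_eq_norm_sq, norm_exp_ofReal_mul_I]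
  refine integral_eq_zero_of_comp_mul_left_eq_smul (h := ofColumn ζ 0 hζ) (c := -1)
    (by norm_num) fun g => ?_
  rw [colMonomial_ofColumn_mul, smul_eq_mul]
  congr 1
  rw [← Complex.exp_conj, map_mul, conj_ofReal, conj_I, ← exp_nat_mul, ← exp_nat_mul, ← exp_add]
  convert exp_pi_mul_I using 2
  rw [← hθ]
  push_cast [d]
  ring

theorem integral_re_pow (k : ℕ) :
    ((∫ g, (g.1 0 0).re ^ k ∂μ : ℝ) : ℂ) =
      (2 ^ k)⁻¹ * ∑ i ∈ Finset.range (k + 1), k.choose i * ∫ g, colMonomial i 0 (k - i) 0 g ∂μ := by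
  rw [← integral_complex_ofReal]
  simp_rw [ofReal_re_pow]
  rw [integral_const_mul, integral_finsetSum _ fun i _ =>
    (by fun_prop : Continuous _).integrable_of_hasCompactSupport (.of_compactSpace _)]
  simp_rw [integral_const_mul]

theorem integral_re_pow_odd (j : ℕ) : ∫ g, (g.1 0 0).re ^ (2 * j + 1) ∂μ = 0 := by
  have h := integral_re_pow μ (2 * j + 1)
  rw [Finset.sum_eq_zero fun i hi => by
    rw [integral_colMonomial_eq_zero μ (by have := Finset.mem_range_succ_iff.1 hi; omega),
      mul_zero], mul_zero] at h
  exact_mod_cast h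

theorem sum_normSqMoment_eq (α β : ℝ) (h : α ^ 2 + β ^ 2 = 1) (n : ℕ) :
    ∑ i ∈ Finset.range (n + 1),
        (n.choose i : ℝ) ^ 2 * α ^ (2 * i) * β ^ (2 * (n - i)) * normSqMoment μ i (n - i) =
      normSqMoment μ n 0 := by
  have hαβ : normSq (α : ℂ) + normSq (-β : ℂ) = 1 := by simpa [normSq_ofReal, ← sq] using h
  have hint : ∀ i l, Integrable (fun g => ((n.choose i * n.choose l * α ^ (i + l) *
      β ^ (n - i + (n - l)) : ℝ) : ℂ) * colMonomial i (n - i) l (n - l) g) μ := fun i l =>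
    (by fun_prop : Continuous _).integrable_of_hasCompactSupport (.of_compactSpace _)
  have hdiag : ∀ i ∈ Finset.range (n + 1),
      ∑ l ∈ Finset.range (n + 1), ∫ g, ((n.choose i * n.choose l * α ^ (i + l) *
        β ^ (n - i + (n - l)) : ℝ) : ℂ) * colMonomial i (n - i) l (n - l) g ∂μ =
      (((n.choose i : ℝ) ^ 2 * α ^ (2 * i) * β ^ (2 * (n - i)) * normSqMoment μ i (n - i) : ℝ) :
        ℂ) := by
    intro i hi
    rw [Finset.sum_eq_single_of_mem i hi fun l hl hli => ?_]
    · rw [integral_const_mul, integral_colMonomial_self]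
      push_cast
      ring
    · rw [integral_const_mul, integral_colMonomial_eq_zero, mul_zero]
      have := Finset.mem_range_succ_iff.1 hi
      have := Finset.mem_range_succ_iff.1 hl
      omega
  apply ofReal_injective
  calc _ = ∫ g, ((normSq ((ofColumn α (-β) hαβ * g).1 0 0) ^ n : ℝ) : ℂ) ∂μ := by
        simp_rw [ofReal_normSq_ofColumn_mul_pow, integral_finsetSum _ fun i _ =>
          integrable_finsetSum _ fun l _ => hint i l, integral_finsetSum _ fun l _ => hint _ l]
        rw [Finset.sum_congr rfl hdiag, ofReal_sum]
    _ = ∫ g, ((normSq (g.1 0 0) ^ n : ℝ) : ℂ) ∂μ :=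
        integral_mul_left_eq_self (fun g : SU2 => ((normSq (g.1 0 0) ^ n : ℝ) : ℂ)) _
    _ = normSqMoment μ n 0 := by
        simp only [normSqMoment, pow_zero, mul_one]
        exact integral_complex_ofReal

theorem normSqMoment_zero_left_eq_zero_right (n : ℕ) :
    normSqMoment μ 0 n = normSqMoment μ n 0 := by
  simpa [Finset.sum_range_succ'] using sum_normSqMoment_eq μ 0 1 (by norm_num) n

theorem succ_mul_normSqMoment_one_left (n : ℕ) :
    (n + 1) * normSqMoment μ 1 n = normSqMoment μ 0 (n + 1) := by
  have h := eq_nat_mul_of_forall_sum_pow_mul_one_sub_pow_eq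
    (c := fun i => ((n + 1).choose i : ℝ) ^ 2 * normSqMoment μ i (n + 1 - i))
    (d := normSqMoment μ (n + 1) 0) (n := n + 1) (by omega) fun s hs => by
      have hs' : 0 ≤ 1 - s := sub_nonneg.2 hs.2
      convert sum_normSqMoment_eq μ (√s) (√(1 - s)) (by simp [hs.1, hs']) (n + 1) using 2 with i
      rw [pow_mul, pow_mul, Real.sq_sqrt hs.1, Real.sq_sqrt hs']
      ring
  simp only [Nat.choose_one_right, Nat.choose_zero_right, Nat.add_sub_cancel, Nat.sub_zero] at h
  push_cast at h
  have hn : (n + 1 : ℝ) ≠ 0 := by positivity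
  apply mul_left_cancel₀ hn
  linear_combination h

theorem normSqMoment_one_left (n : ℕ) :
    normSqMoment μ 1 n = normSqMoment μ 0 n - normSqMoment μ 0 (n + 1) := by
  have hint : ∀ k, Integrable (fun g : SU2 => normSq (g.1 0 0) ^ 0 * normSq (g.1 1 0) ^ k) μ :=
    fun k => (by fun_prop : Continuous _).integrable_of_hasCompactSupport (.of_compactSpace _)
  rw [normSqMoment, normSqMoment, normSqMoment, ← integral_sub (hint n) (hint (n + 1))]
  congr 1 with g
  linear_combination normSq (g.1 1 0) ^ n * normSq_add_normSq g

variable [IsProbabilityMeasure μ]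

theorem normSqMoment_zero_left (n : ℕ) : normSqMoment μ 0 n = (n + 1 : ℝ)⁻¹ := by
  induction n with
  | zero => simp [normSqMoment]
  | succ n ih =>
    have h := succ_mul_normSqMoment_one_left μ n
    rw [normSqMoment_one_left, ih, mul_sub, mul_inv_cancel₀ (by positivity)] at h
    push_cast
    exact eq_inv_of_mul_eq_one_left (by linear_combination -h)

theorem normSqMoment_zero_right (n : ℕ) : normSqMoment μ n 0 = (n + 1 : ℝ)⁻¹ := by
  rw [← normSqMoment_zero_left_eq_zero_right, normSqMoment_zero_left]

theorem integral_re_pow_even (j : ℕ) :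
    ∫ g, (g.1 0 0).re ^ (2 * j) ∂μ = j.centralBinom / (4 ^ j * (j + 1)) := by
  have h := integral_re_pow μ (2 * j)
  rw [Finset.sum_eq_single_of_mem j (Finset.mem_range.2 (by omega)) fun i hi hij => by
    rw [integral_colMonomial_eq_zero μ (by have := Finset.mem_range_succ_iff.1 hi; omega),
      mul_zero], show 2 * j - j = j by omega, integral_colMonomial_self,
    normSqMoment_zero_right] at h
  rw [Nat.centralBinom_eq_two_mul_choose]
  apply ofReal_injective
  rw [h]
  push_cast
  rw [pow_mul]
  field_simp
  ring

theorem integral_re_pow_eq (k : ℕ) :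
    ∫ g, (g.1 0 0).re ^ k ∂μ =
      2 / Real.pi * ∫ x in 0..Real.pi, Real.cos x ^ k * Real.sin x ^ 2 := by
  rw [integral_cos_pow_mul_sin_sq]
  rcases Nat.even_or_odd' k with ⟨j, rfl | rfl⟩
  · rw [integral_re_pow_even, integral_cos_pow_even]
    push_cast
    field_simp
  · rw [integral_re_pow_odd, integral_cos_pow_odd]
    simp

theorem integral_eval_re (P : Polynomial ℝ) :
    ∫ g, P.eval (g.1 0 0).re ∂μ =
      2 / Real.pi * ∫ x in 0..Real.pi, P.eval (Real.cos x) * Real.sin x ^ 2 := by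
  induction P using Polynomial.induction_on' with
  | add p q hp hq =>
    have hint (r : Polynomial ℝ) : Integrable (fun g : SU2 => r.eval (g.1 0 0).re) μ :=
      (by fun_prop : Continuous _).integrable_of_hasCompactSupport (.of_compactSpace _)
    have hint' (r : Polynomial ℝ) : IntervalIntegrable
        (fun x => r.eval (Real.cos x) * Real.sin x ^ 2) volume 0 Real.pi :=
      (by fun_prop : Continuous _).intervalIntegrable _ _
    simp only [Polynomial.eval_add, add_mul]
    rw [integral_add (hint p) (hint q), intervalIntegral.integral_add (hint' p) (hint' q), hp, hq,
      mul_add]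
  | monomial k c =>
    simp only [Polynomial.eval_monomial, mul_assoc]
    rw [integral_const_mul, intervalIntegral.integral_const_mul, integral_re_pow_eq]
    ring

end SU2

/-- Orthonormality of the `SU(2)` characters `χ_{m/2}(g) = U_m (Re (trace g) / 2)`:
`∫ χ_{m/2} χ_{n/2} dμ = δ_{mn}`. -/
theorem haar_integral_character_orthonormality (μ : Measure SU2) [μ.IsHaarMeasure]
    [IsProbabilityMeasure μ] (m n : ℕ) :
    ∫ g : SU2,
        (Polynomial.Chebyshev.U ℝ (m : ℤ)).eval (((g : SU2).1.trace).re / 2) *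
          (Polynomial.Chebyshev.U ℝ (n : ℤ)).eval (((g : SU2).1.trace).re / 2) ∂μ =
      if m = n then 1 else 0 := by
  simp_rw [SU2.re_trace_div_two, ← Polynomial.eval_mul, SU2.integral_eval_re,
    Polynomial.Chebyshev.eval_U_mul_U_cos_mul_sin_sq, integral_sin_mul_sin]
  split_ifs
  · field_simp
  · simp
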